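/- Let {S, T, E, N, x} be a data set as above (with O_{E,T}, O_{N,T} mapping X into holomorphic functions on D and M_{F^S} mapping X into H(K_S)), and set P := M_{F^S}^{[*]} M_{F^S}. A function f : D → Y is a solution of the problem AIP (i.e., f ∈ H(K_S), M_{F^S}^{[*]} f = x and ‖f‖_{H(K_S)} ≤ 1) if and only if the L(ℂ ⊕ X ⊕ Y)-valued kernel K(z,ζ) = [[1, x*, f(ζ)*],[x, P, F^S(ζ)*],[f(z), F^S(z), K_S(z,ζ)]] is a positive kernel on D × D. -/

import Mathlib

/-!
Write `A = ∑ᵢ (⟪x, xᵢ⟫ + ⟪f(zᵢ), yᵢ⟫)` and `u = ∑ᵢ (M_F xᵢ + k_{zᵢ} yᵢ)`. The reproducing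
property turns the quadratic form of the block kernel at `(zᵢ; cᵢ, xᵢ, yᵢ)` into
`|∑ᵢ cᵢ + A|² + ‖u‖² − |A|²`, so the kernel is positive iff `|A| ≤ ‖u‖` for all such data.
If `g ∈ H(K_S)` solves the problem, then `A = ⟪g, u⟫` and Cauchy–Schwarz gives the bound.
Conversely, the bound says that `u ↦ A` is a well-defined contraction on the span of the range
of `M_F` and the kernel functions; Hahn–Banach and the Riesz representation turn it into a
vector `g` of norm `≤ 1`, and testing `g` against `k_ζ y` and `M_F v` shows `g = f` and
`M_F^{[*]} g = x`.
-/

open ContinuousLinearMap Metric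
open scoped InnerProductSpace ComplexOrder

noncomputable section

/-- The de Branges–Rovnyak kernel `K_S(z,ζ) = (I − S(z)S(ζ)*)/(1 − z ζ̄)`. -/
def dbrKernel {U Y : Type*}
    [NormedAddCommGroup U] [InnerProductSpace ℂ U] [CompleteSpace U]
    [NormedAddCommGroup Y] [InnerProductSpace ℂ Y] [CompleteSpace Y]
    (S : ℂ → (U →L[ℂ] Y)) (z ζ : ℂ) : Y →L[ℂ] Y :=
  (1 - z * (starRingEnd ℂ) ζ)⁻¹ • (1 - (S z) ∘L (adjoint (S ζ)))

/-- The operator-valued Schur class on the unit disk. -/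
def IsSchur {U Y : Type*}
    [NormedAddCommGroup U] [NormedSpace ℂ U]
    [NormedAddCommGroup Y] [NormedSpace ℂ Y]
    (S : ℂ → (U →L[ℂ] Y)) : Prop :=
  AnalyticOnNhd ℂ S (ball (0:ℂ) 1) ∧ ∀ z ∈ ball (0:ℂ) 1, ‖S z‖ ≤ 1

/-- `H` (with realization map `J` and kernel elements `k`) is the reproducing kernel
Hilbert space of the de Branges–Rovnyak kernel `K_S`. -/
structure IsDBRSpace {U Y : Type*}
    [NormedAddCommGroup U] [InnerProductSpace ℂ U] [CompleteSpace U]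
    [NormedAddCommGroup Y] [InnerProductSpace ℂ Y] [CompleteSpace Y]
    (S : ℂ → (U →L[ℂ] Y)) (H : Type*) [NormedAddCommGroup H]
    [InnerProductSpace ℂ H] [CompleteSpace H]
    (J : H →ₗ[ℂ] (ℂ → Y)) (k : ℂ → Y → H) : Prop where
  ext : ∀ f g : H, (∀ z ∈ ball (0:ℂ) 1, J f z = J g z) → f = g
  kernel_eq : ∀ ζ ∈ ball (0:ℂ) 1, ∀ y : Y, ∀ z ∈ ball (0:ℂ) 1,
    J (k ζ y) z = dbrKernel S z ζ y
  reproducing : ∀ ζ ∈ ball (0:ℂ) 1, ∀ (y : Y) (f : H),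
    ⟪k ζ y, f⟫_ℂ = ⟪y, J f ζ⟫_ℂ

/-- The rank-one operator `x x* : y ↦ ⟨y, x⟩ x`. -/
def rankOne {X : Type*} [NormedAddCommGroup X] [InnerProductSpace ℂ X]
    (x : X) : X →L[ℂ] X :=
  (innerSL ℂ x).smulRight x

section Extension

variable {H : Type*} [NormedAddCommGroup H] [InnerProductSpace ℂ H] [CompleteSpace H]

theorem exists_norm_le_one_inner_map_eq {M : Type*} [AddCommGroup M] [Module ℂ M]
    (Φ : M →ₗ[ℂ] H) (ψ : M →ₗ[ℂ] ℂ) (hψ : ∀ m, ‖ψ m‖ ≤ ‖Φ m‖) :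
    ∃ g : H, ‖g‖ ≤ 1 ∧ ∀ m, ⟪g, Φ m⟫_ℂ = ψ m := by
  have hker : LinearMap.ker Φ ≤ LinearMap.ker ψ := fun m hm => by
    simpa [LinearMap.mem_ker.mp hm] using hψ m
  set ψ₀ : LinearMap.range Φ →ₗ[ℂ] ℂ :=
    (LinearMap.ker Φ).liftQ ψ hker ∘ₗ Φ.quotKerEquivRange.symm.toLinearMap
  have hψ₀ : ∀ m, ψ₀ ⟨Φ m, LinearMap.mem_range_self Φ m⟩ = ψ m := fun m => by
    rw [LinearMap.comp_apply, LinearEquiv.coe_coe,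
      (LinearEquiv.symm_apply_eq _).mpr (Subtype.ext (Φ.quotKerEquivRange_apply_mk m).symm)]
    rfl
  have hψ₀_le : ∀ r, ‖ψ₀ r‖ ≤ 1 * ‖r‖ := by
    rintro ⟨_, m, rfl⟩
    rw [one_mul, hψ₀]
    exact hψ m
  obtain ⟨G, hGψ₀, hG⟩ := exists_extension_norm_eq _ (ψ₀.mkContinuous 1 hψ₀_le)
  refine ⟨(InnerProductSpace.toDual ℂ H).symm G, ?_, fun m => ?_⟩
  · rw [LinearIsometryEquiv.norm_map, hG]
    exact LinearMap.mkContinuous_norm_le _ zero_le_one _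
  · rw [InnerProductSpace.toDual_symm_apply, ← hψ₀]
    exact hGψ₀ ⟨Φ m, _⟩

theorem exists_norm_le_one_inner_eq {ι : Type*} (v : ι → H) (a : ι → ℂ)
    (h : ∀ (n : ℕ) (c : Fin n → ℂ) (t : Fin n → ι),
      ‖∑ i, c i * a (t i)‖ ≤ ‖∑ i, c i • v (t i)‖) :
    ∃ g : H, ‖g‖ ≤ 1 ∧ ∀ i, ⟪g, v i⟫_ℂ = a i := by
  have hcomb : ∀ m : ι →₀ ℂ,
      ‖Finsupp.linearCombination ℂ a m‖ ≤ ‖Finsupp.linearCombination ℂ v m‖ := by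
    intro m
    set e := m.support.equivFin.symm
    simp only [Finsupp.linearCombination_apply, Finsupp.sum, smul_eq_mul]
    rw [← m.support.sum_coe_sort, ← m.support.sum_coe_sort, ← e.sum_comp, ← e.sum_comp]
    exact h _ (fun i => m (e i)) (fun i => e i)
  obtain ⟨g, hg, hgm⟩ := exists_norm_le_one_inner_map_eq _ _ hcomb
  exact ⟨g, hg, fun i => by simpa using hgm (Finsupp.single i 1)⟩

end Extension

section BlockKernel

variable {X U Y : Type*}
    [NormedAddCommGroup X] [InnerProductSpace ℂ X] [CompleteSpace X]
    [NormedAddCommGroup U] [InnerProductSpace ℂ U] [CompleteSpace U]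
    [NormedAddCommGroup Y] [InnerProductSpace ℂ Y] [CompleteSpace Y]

/-- The quadratic form `∑ᵢⱼ ⟪vᵢ, K(zᵢ, zⱼ) vⱼ⟫`, `vᵢ = (cᵢ, xᵢ, yᵢ) ∈ ℂ ⊕ X ⊕ Y`, of the block
kernel `K(z,ζ) = [[1, x*, f(ζ)*], [x, P, F^S(ζ)*], [f(z), F^S(z), K_S(z,ζ)]]`. -/
def blockKernelForm (S : ℂ → (U →L[ℂ] Y)) (FS : ℂ → (X →L[ℂ] Y)) (P : X →L[ℂ] X) (x : X)
    (f : ℂ → Y) {ι : Type*} [Fintype ι] (z c : ι → ℂ) (xv : ι → X) (yv : ι → Y) : ℂ :=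
  ∑ i, ∑ j,
    ((starRingEnd ℂ) (c i) * (c j + ⟪x, xv j⟫_ℂ + ⟪f (z j), yv j⟫_ℂ)
      + ⟪xv i, (c j) • x + P (xv j) + adjoint (FS (z j)) (yv j)⟫_ℂ
      + ⟪yv i, (c j) • f (z i) + FS (z i) (xv j) + dbrKernel S (z i) (z j) (yv j)⟫_ℂ)

end BlockKernel

namespace IsDBRSpace

variable {X U Y : Type*}
    [NormedAddCommGroup X] [InnerProductSpace ℂ X] [CompleteSpace X]
    [NormedAddCommGroup U] [InnerProductSpace ℂ U] [CompleteSpace U]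
    [NormedAddCommGroup Y] [InnerProductSpace ℂ Y] [CompleteSpace Y]
    {S : ℂ → (U →L[ℂ] Y)}
    {H : Type*} [NormedAddCommGroup H] [InnerProductSpace ℂ H] [CompleteSpace H]
    {J : H →ₗ[ℂ] (ℂ → Y)} {k : ℂ → Y → H}

theorem inner_kernel_right (hH : IsDBRSpace S H J k) {ζ : ℂ} (hζ : ζ ∈ ball (0:ℂ) 1) (y : Y)
    (g : H) : ⟪g, k ζ y⟫_ℂ = ⟪J g ζ, y⟫_ℂ := by
  rw [← inner_conj_symm, hH.reproducing ζ hζ, inner_conj_symm]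

theorem kernel_smul (hH : IsDBRSpace S H J k) {ζ : ℂ} (hζ : ζ ∈ ball (0:ℂ) 1) (a : ℂ) (y : Y) :
    k ζ (a • y) = a • k ζ y :=
  ext_inner_right ℂ fun g => by
    rw [hH.reproducing ζ hζ, inner_smul_left, inner_smul_left, hH.reproducing ζ hζ]

variable {FS : ℂ → (X →L[ℂ] Y)} {MF : X →L[ℂ] H} (x : X) (f : ℂ → Y)

theorem norm_le_of_solution (hH : IsDBRSpace S H J k) {g : H}
    (hgf : ∀ z ∈ ball (0:ℂ) 1, J g z = f z) (hgx : adjoint MF g = x) (hg : ‖g‖ ≤ 1)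
    {ι : Type*} [Fintype ι] {z : ι → ℂ} (hz : ∀ i, z i ∈ ball (0:ℂ) 1)
    (xv : ι → X) (yv : ι → Y) :
    ‖∑ i, (⟪x, xv i⟫_ℂ + ⟪f (z i), yv i⟫_ℂ)‖ ≤ ‖∑ i, (MF (xv i) + k (z i) (yv i))‖ := by
  have hrepr : ∑ i, (⟪x, xv i⟫_ℂ + ⟪f (z i), yv i⟫_ℂ)
      = ⟪g, ∑ i, (MF (xv i) + k (z i) (yv i))⟫_ℂ := by
    simp only [inner_sum, inner_add_right, ← hgx, adjoint_inner_left,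
      hH.inner_kernel_right (hz _), hgf _ (hz _)]
  calc _ ≤ ‖g‖ * ‖∑ i, (MF (xv i) + k (z i) (yv i))‖ := hrepr ▸ norm_inner_le_norm _ _
    _ ≤ _ := mul_le_of_le_one_left (norm_nonneg _) hg

theorem blockKernelForm_eq (hH : IsDBRSpace S H J k)
    (hMF : ∀ x0 : X, ∀ z ∈ ball (0:ℂ) 1, J (MF x0) z = FS z x0)
    {ι : Type*} [Fintype ι] {z : ι → ℂ} (hz : ∀ i, z i ∈ ball (0:ℂ) 1)
    (c : ι → ℂ) (xv : ι → X) (yv : ι → Y) :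
    blockKernelForm S FS (adjoint MF ∘L MF) x f z c xv yv =
      ((‖∑ i, c i + ∑ i, (⟪x, xv i⟫_ℂ + ⟪f (z i), yv i⟫_ℂ)‖ ^ 2
        + ‖∑ i, (MF (xv i) + k (z i) (yv i))‖ ^ 2
        - ‖∑ i, (⟪x, xv i⟫_ℂ + ⟪f (z i), yv i⟫_ℂ)‖ ^ 2 : ℝ) : ℂ) := by
  set a : ι → ℂ := fun i => ⟪x, xv i⟫_ℂ + ⟪f (z i), yv i⟫_ℂ
  have hgram : ∀ i j, ⟪MF (xv i) + k (z i) (yv i), MF (xv j) + k (z j) (yv j)⟫_ℂ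
      = ⟪xv i, (adjoint MF ∘L MF) (xv j) + adjoint (FS (z j)) (yv j)⟫_ℂ
        + ⟪yv i, FS (z i) (xv j) + dbrKernel S (z i) (z j) (yv j)⟫_ℂ := fun i j => by
    simp only [inner_add_left, inner_add_right, comp_apply, adjoint_inner_right,
      hH.reproducing _ (hz i), hH.kernel_eq _ (hz j) _ _ (hz i)]
    rw [hH.inner_kernel_right (hz j), hMF _ _ (hz i), hMF _ _ (hz j)]
    ring
  have hentry : ∀ i j,
      (starRingEnd ℂ) (c i) * (c j + ⟪x, xv j⟫_ℂ + ⟪f (z j), yv j⟫_ℂ)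
          + ⟪xv i, (c j) • x + (adjoint MF ∘L MF) (xv j) + adjoint (FS (z j)) (yv j)⟫_ℂ
          + ⟪yv i, (c j) • f (z i) + FS (z i) (xv j) + dbrKernel S (z i) (z j) (yv j)⟫_ℂ
        = (starRingEnd ℂ) (c i) * (c j + a j) + (starRingEnd ℂ) (a i) * c j
          + ⟪MF (xv i) + k (z i) (yv i), MF (xv j) + k (z j) (yv j)⟫_ℂ := fun i j => by
    simp only [hgram, a, add_assoc, inner_add_right, inner_smul_right, map_add, inner_conj_symm]
    ring
  simp only [blockKernelForm, hentry, Finset.sum_add_distrib, ← Finset.mul_sum, ← Finset.sum_mul,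
    ← inner_sum, ← sum_inner, ← map_sum (starRingEnd ℂ)]
  push_cast
  rw [inner_self_eq_norm_sq_to_K, RCLike.ofReal_eq_complex_ofReal, ← Complex.conj_mul',
    ← Complex.conj_mul', map_add]
  ring

theorem forall_blockKernelForm_nonneg_iff (hH : IsDBRSpace S H J k)
    (hMF : ∀ x0 : X, ∀ z ∈ ball (0:ℂ) 1, J (MF x0) z = FS z x0) :
    (∀ (n : ℕ) (z : Fin n → ℂ), (∀ i, z i ∈ ball (0:ℂ) 1) →
      ∀ (c : Fin n → ℂ) (xv : Fin n → X) (yv : Fin n → Y),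
        0 ≤ blockKernelForm S FS (adjoint MF ∘L MF) x f z c xv yv) ↔
    ∀ (n : ℕ) (z : Fin n → ℂ), (∀ i, z i ∈ ball (0:ℂ) 1) →
      ∀ (xv : Fin n → X) (yv : Fin n → Y),
        ‖∑ i, (⟪x, xv i⟫_ℂ + ⟪f (z i), yv i⟫_ℂ)‖ ≤ ‖∑ i, (MF (xv i) + k (z i) (yv i))‖ := by
  constructor
  · intro hform n z hz xv yv
    rcases n with _ | n
    · simp
    have hscalar := hform _ z hz (Pi.single 0 (-∑ i, (⟪x, xv i⟫_ℂ + ⟪f (z i), yv i⟫_ℂ))) xv yv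
    rw [hH.blockKernelForm_eq x f hMF hz, Complex.zero_le_real] at hscalar
    simp only [Finset.sum_pi_single', Finset.mem_univ, if_true, neg_add_cancel, norm_zero]
      at hscalar
    exact le_of_sq_le_sq (by linarith) (norm_nonneg _)
  · intro hnorm n z hz c xv yv
    rw [hH.blockKernelForm_eq x f hMF hz, Complex.zero_le_real]
    have := pow_le_pow_left₀ (norm_nonneg _) (hnorm n z hz xv yv) 2
    linarith [sq_nonneg ‖∑ i, c i + ∑ i, (⟪x, xv i⟫_ℂ + ⟪f (z i), yv i⟫_ℂ)‖]

theorem exists_solution_of_norm_le (hH : IsDBRSpace S H J k)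
    (hnorm : ∀ (n : ℕ) (z : Fin n → ℂ), (∀ i, z i ∈ ball (0:ℂ) 1) →
      ∀ (xv : Fin n → X) (yv : Fin n → Y),
        ‖∑ i, (⟪x, xv i⟫_ℂ + ⟪f (z i), yv i⟫_ℂ)‖ ≤ ‖∑ i, (MF (xv i) + k (z i) (yv i))‖) :
    ∃ g : H, (∀ z ∈ ball (0:ℂ) 1, J g z = f z) ∧ adjoint MF g = x ∧ ‖g‖ ≤ 1 := by
  obtain ⟨g, hg, hgv⟩ := exists_norm_le_one_inner_eq
    (fun t : ball (0:ℂ) 1 × X × Y => MF t.2.1 + k t.1 t.2.2)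
    (fun t => ⟪x, t.2.1⟫_ℂ + ⟪f t.1, t.2.2⟫_ℂ) fun n c t => by
      simpa [inner_smul_right, hH.kernel_smul (t _).1.2, mul_add, smul_add] using
        hnorm n (fun i => (t i).1) (fun i => (t i).1.2) (fun i => c i • (t i).2.1)
          (fun i => c i • (t i).2.2)
  have h0 : (0:ℂ) ∈ ball (0:ℂ) 1 := mem_ball_self one_pos
  have hk0 : k 0 (0:Y) = 0 := by simpa using hH.kernel_smul h0 0 0
  refine ⟨g, fun ζ hζ => ext_inner_right ℂ fun y => ?_, ext_inner_right ℂ fun v => ?_, hg⟩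
  · simpa [hH.inner_kernel_right hζ] using hgv (⟨ζ, hζ⟩, 0, y)
  · simpa [adjoint_inner_left, hk0] using hgv (⟨0, h0⟩, v, 0)

end IsDBRSpace

theorem stmt4
    {X U Y : Type*}
    [NormedAddCommGroup X] [InnerProductSpace ℂ X] [CompleteSpace X]
    [NormedAddCommGroup U] [InnerProductSpace ℂ U] [CompleteSpace U]
    [NormedAddCommGroup Y] [InnerProductSpace ℂ Y] [CompleteSpace Y]
    (S : ℂ → (U →L[ℂ] Y)) (x : X)
    (FS : ℂ → (X →L[ℂ] Y))
    (H : Type*) [NormedAddCommGroup H] [InnerProductSpace ℂ H] [CompleteSpace H]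
    (J : H →ₗ[ℂ] (ℂ → Y)) (k : ℂ → Y → H) (hH : IsDBRSpace S H J k)
    (MF : X →L[ℂ] H)
    (hMF : ∀ x0 : X, ∀ z ∈ ball (0:ℂ) 1, J (MF x0) z = FS z x0)
    -- `P := M_{F^S}^{[*]} M_{F^S}`
    (P : X →L[ℂ] X) (hP : P = adjoint MF ∘L MF)
    -- the function `f : D → Y`
    (f : ℂ → Y) :
    (∃ g : H, (∀ z ∈ ball (0:ℂ) 1, J g z = f z) ∧ adjoint MF g = x ∧ ‖g‖ ≤ 1) ↔
      (∀ (n : ℕ) (z : Fin n → ℂ), (∀ i, z i ∈ ball (0:ℂ) 1) →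
        ∀ (c : Fin n → ℂ) (xv : Fin n → X) (yv : Fin n → Y),
          0 ≤ ∑ i, ∑ j,
            ((starRingEnd ℂ) (c i) *
                (c j + ⟪x, xv j⟫_ℂ + ⟪f (z j), yv j⟫_ℂ)
              + ⟪xv i, (c j) • x + P (xv j) + adjoint (FS (z j)) (yv j)⟫_ℂ
              + ⟪yv i, (c j) • f (z i) + FS (z i) (xv j)
                  + dbrKernel S (z i) (z j) (yv j)⟫_ℂ)) := by
  subst hP
  have hform := hH.forall_blockKernelForm_nonneg_iff x f hMF
  constructor
  · rintro ⟨g, hgf, hgx, hg⟩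
    exact hform.2 fun n z hz xv yv => hH.norm_le_of_solution x f hgf hgx hg hz xv yv
  · exact fun hK => hH.exists_solution_of_norm_le x f (hform.1 hK)
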